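/- If c is an n-fan, i.e. an n-shell with one term (say the k-th) removed, then ∂_n(c) is an (n-1)-shell. -/
import Mathlib


open CategoryTheory

universe u v

namespace AmalgHomology

variable {C : Type u} [Category.{v} C]

/-- A downward-closed collection of finite subsets of `ℕ`. -/
def DownClosed (X : Set (Finset ℕ)) : Prop :=
  ∀ ⦃u v : Finset ℕ⦄, u ⊆ v → v ∈ X → u ∈ X

/-- The full power set `P(s)` of a finite set, viewed as a set of finsets. -/
def pow (s : Finset ℕ) : Set (Finset ℕ) := {u | u ⊆ s}

/-- `P⁻(s) = P(s) \ {s}`. -/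
def powMinus (s : Finset ℕ) : Set (Finset ℕ) := {u | u ⊆ s ∧ u ≠ s}

lemma pow_mono {s t : Finset ℕ} (h : s ⊆ t) : pow s ⊆ pow t :=
  fun _ hu => Finset.Subset.trans hu h

lemma powMinus_subset_pow (s : Finset ℕ) : powMinus s ⊆ pow s := fun _ hu => hu.1

lemma empty_mem_pow (s : Finset ℕ) : (∅ : Finset ℕ) ∈ pow s := Finset.empty_subset s

lemma pow_subset_of_mem {X : Set (Finset ℕ)} (hX : DownClosed X) {u : Finset ℕ}
    (hu : u ∈ X) : pow u ⊆ X := fun _ hv => hX hv hu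

/-- The inclusion functor between the index categories of two collections. -/
def incl {X Y : Set (Finset ℕ)} (h : X ⊆ Y) : (↥X) ⥤ (↥Y) :=
  Monotone.functor (f := fun u => ⟨u.1, h u.2⟩) (fun {_ _} hab => hab)

/-- Restriction of a functor to a smaller collection of index sets. -/
def res {X Y : Set (Finset ℕ)} (h : X ⊆ Y) (F : (↥Y) ⥤ C) : (↥X) ⥤ C :=
  incl h ⋙ F

/-- A family of functors into `C`: for each collection `X` of finite index sets,
a set of functors `X ⥤ C`. -/
def Fam (C : Type u) [Category.{v} C] := ∀ X : Set (Finset ℕ), Set ((↥X) ⥤ C)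

/-- A regular simplex in `C` whose support has `m` elements (so of dimension `m - 1`):
a functor from the power set of its support into `C`. -/
structure Simp (C : Type u) [Category.{v} C] (m : ℕ) where
  supp : Finset ℕ
  card_supp : supp.card = m
  F : (↥(pow supp)) ⥤ C

/-- The "base" `f(∅)` of a simplex. -/
def Simp.base {m : ℕ} (f : Simp C m) : C := f.F.obj ⟨∅, empty_mem_pow _⟩

/-- Membership of a simplex in a family of functors. -/
def Simp.InFam (𝒜 : Fam C) {m : ℕ} (f : Simp C m) : Prop := f.F ∈ 𝒜 (pow f.supp)

/-- The `i`-th face `∂^i f` of a simplex: restrict to the power set of the support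
with its `i`-th element (in increasing order) deleted. -/
noncomputable def Simp.face {m : ℕ} (f : Simp C (m + 1)) (i : Fin (m + 1)) : Simp C m where
  supp := f.supp.erase (f.supp.orderEmbOfFin f.card_supp i)
  card_supp := by
    rw [Finset.card_erase_of_mem (Finset.orderEmbOfFin_mem _ _ _), f.card_supp]
    omega
  F := res (pow_mono (Finset.erase_subset _ _)) f.F

/-- The free abelian group of chains of simplices with `m`-element supports. -/
abbrev Chain (C : Type u) [Category.{v} C] (m : ℕ) := Simp C m →₀ ℤ

/-- The boundary `∂ f = Σ_i (-1)^i ∂^i f` of a single simplex. -/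
noncomputable def sboundary {m : ℕ} (f : Simp C (m + 1)) : Chain C m :=
  ∑ i : Fin (m + 1), ((-1 : ℤ) ^ (i : ℕ)) • Finsupp.single (f.face i) 1

/-- The boundary operator on chains, extended linearly. -/
noncomputable def bd {m : ℕ} (c : Chain C (m + 1)) : Chain C m :=
  c.sum fun f a => a • sboundary f

/-- The `i`-th boundary operator `∂^i` on chains, extended linearly. -/
noncomputable def bdi {m : ℕ} (i : Fin (m + 1)) (c : Chain C (m + 1)) : Chain C m :=
  c.sum fun f a => a • Finsupp.single (f.face i) 1

/-- All simplices appearing in the chain belong to the family `𝒜`. -/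
def ChainIn (𝒜 : Fam C) {m : ℕ} (c : Chain C m) : Prop := ∀ f ∈ c.support, f.InFam 𝒜

/-- All simplices appearing in the chain are over the base `B`. -/
def ChainOver (B : C) {m : ℕ} (c : Chain C m) : Prop := ∀ f ∈ c.support, f.base = B

/-- The support of a chain: the union of the supports of the simplices appearing in it. -/
noncomputable def chainSupp {m : ℕ} (c : Chain C m) : Finset ℕ := c.support.sup Simp.supp

/-- `c` is the boundary of a chain of simplices in `𝒜` over `B`,
i.e. `c ∈ B_n(𝒜; B)`. -/
def IsBoundaryIn (𝒜 : Fam C) (B : C) {m : ℕ} (c : Chain C m) : Prop :=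
  ∃ d : Chain C (m + 1), ChainIn 𝒜 d ∧ ChainOver B d ∧ bd d = c

/-- The shell compatibility condition `∂^i f_j = ∂^{j-1} f_i` for `i < j`. -/
def ShellCompat {n : ℕ} (f : Fin (n + 2) → Simp C (n + 1)) : Prop :=
  ∀ (i j : ℕ) (hij : i < j) (hj : j < n + 2),
    (f ⟨j, hj⟩).face ⟨i, by omega⟩ = (f ⟨i, by omega⟩).face ⟨j - 1, by omega⟩

/-- The chain `Σ_{0 ≤ i ≤ n+1} (-1)^i f_i`. -/
noncomputable def shellChain {n : ℕ} (f : Fin (n + 2) → Simp C (n + 1)) : Chain C (n + 1) :=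
  ∑ i : Fin (n + 2), ((-1 : ℤ) ^ (i : ℕ)) • Finsupp.single (f i) 1

/-- `c` is an `n`-shell: `c = ± Σ_{0 ≤ i ≤ n+1} (-1)^i f_i` with the shell
compatibility condition. -/
def IsShell {n : ℕ} (c : Chain C (n + 1)) : Prop :=
  ∃ (ε : ℤ) (f : Fin (n + 2) → Simp C (n + 1)),
    (ε = 1 ∨ ε = -1) ∧ ShellCompat f ∧ c = ε • shellChain f

/-- `c` is an `n`-shell made of simplices in `𝒜` over `B`. -/
def IsShellIn (𝒜 : Fam C) (B : C) {n : ℕ} (c : Chain C (n + 1)) : Prop :=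
  ∃ (ε : ℤ) (f : Fin (n + 2) → Simp C (n + 1)),
    (ε = 1 ∨ ε = -1) ∧ ShellCompat f ∧ (∀ i, (f i).InFam 𝒜 ∧ (f i).base = B) ∧
    c = ε • shellChain f

/-- `c` is an `n`-shell in `𝒜` over `B` with support `[n+1] = {0, …, n+1}`. -/
def IsShellStd (𝒜 : Fam C) (B : C) {n : ℕ} (c : Chain C (n + 1)) : Prop :=
  ∃ (ε : ℤ) (f : Fin (n + 2) → Simp C (n + 1)),
    (ε = 1 ∨ ε = -1) ∧ ShellCompat f ∧
    (∀ i, (f i).InFam 𝒜 ∧ (f i).base = B ∧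
      (f i).supp = (Finset.range (n + 2)).erase (i : ℕ)) ∧
    c = ε • shellChain f

/-- `c` is an `n`-pocket in `𝒜` over `B` with support `[n] = {0, …, n}`:
an `n`-cycle of the form `f - g` with `f, g` supported on `[n]`. -/
def IsPocketStd (𝒜 : Fam C) (B : C) {n : ℕ} (c : Chain C (n + 1)) : Prop :=
  ∃ f g : Simp C (n + 1),
    f.InFam 𝒜 ∧ g.InFam 𝒜 ∧ f.base = B ∧ g.base = B ∧
    f.supp = Finset.range (n + 1) ∧ g.supp = Finset.range (n + 1) ∧
    bd c = 0 ∧ c = Finsupp.single f 1 - Finsupp.single g 1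

/-- The fan compatibility condition: the shell condition away from index `k`. -/
def FanCompat {n : ℕ} (k : Fin (n + 2)) (f : Fin (n + 2) → Simp C (n + 1)) : Prop :=
  ∀ (i j : ℕ) (hij : i < j) (hj : j < n + 2), i ≠ (k : ℕ) → j ≠ (k : ℕ) →
    (f ⟨j, hj⟩).face ⟨i, by omega⟩ = (f ⟨i, by omega⟩).face ⟨j - 1, by omega⟩

/-- The chain `Σ_{i ≠ k} (-1)^i f_i` (an `n`-shell missing the `k`-th term). -/
noncomputable def fanChain {n : ℕ} (k : Fin (n + 2)) (f : Fin (n + 2) → Simp C (n + 1)) :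
    Chain C (n + 1) :=
  ∑ i ∈ Finset.univ.erase k, ((-1 : ℤ) ^ (i : ℕ)) • Finsupp.single (f i) 1

/-- `𝒜` has `n`-amalgamation: any functor on `P⁻([n-1])` in `𝒜` extends to an
`(n-1)`-simplex in `𝒜`. -/
def HasAmalg (𝒜 : Fam C) (n : ℕ) : Prop :=
  ∀ F : (↥(powMinus (Finset.range n))) ⥤ C, F ∈ 𝒜 (powMinus (Finset.range n)) →
    ∃ (g : Simp C n) (hsupp : g.supp = Finset.range n),
      g.InFam 𝒜 ∧
      res (show powMinus (Finset.range n) ⊆ pow g.supp by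
        rw [hsupp]; exact powMinus_subset_pow _) g.F = F

/-- `𝒜` has strong 2-amalgamation. -/
def Strong2Amalg (𝒜 : Fam C) : Prop :=
  ∀ (s t : Finset ℕ) (f : (↥(pow s)) ⥤ C) (g : (↥(pow t)) ⥤ C),
    f ∈ 𝒜 (pow s) → g ∈ 𝒜 (pow t) →
    res (pow_mono Finset.inter_subset_left) f = res (pow_mono Finset.inter_subset_right) g →
    ∃ h : (↥(pow (s ∪ t))) ⥤ C, h ∈ 𝒜 (pow (s ∪ t)) ∧
      res (pow_mono Finset.subset_union_left) h = f ∧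
      res (pow_mono Finset.subset_union_right) h = g

/-- `𝒜` is non-trivial: non-empty, with 1-amalgamation and strong 2-amalgamation. -/
def NontrivialFam (𝒜 : Fam C) : Prop :=
  (∃ (X : Set (Finset ℕ)) (F : (↥X) ⥤ C), F ∈ 𝒜 X) ∧ HasAmalg 𝒜 1 ∧ Strong2Amalg 𝒜

/-- The reindexing functor on index categories induced by `σ : ℕ → ℕ`. -/
def imageMap (σ : ℕ → ℕ) {X Y : Set (Finset ℕ)}
    (hY : ∀ u : ↥X, Finset.image σ u.1 ∈ Y) : (↥X) ⥤ (↥Y) :=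
  Monotone.functor (f := fun u => ⟨Finset.image σ u.1, hY u⟩)
    (fun {_ _} hab => by exact Finset.image_subset_image hab)

/-- `F` and `G` are isomorphic via the order-preserving relabelling `σ` of indices:
`Y` is the image of `X` under `σ`, and there is a compatible (natural) family of
isomorphisms `F(u) ≅ G(σ(u))`. -/
def IsIsoVia {X Y : Set (Finset ℕ)} (σ : ℕ → ℕ) (F : (↥X) ⥤ C) (G : (↥Y) ⥤ C) : Prop :=
  StrictMono σ ∧ (∀ v ∈ Y, ∃ u ∈ X, Finset.image σ u = v) ∧
  ∃ hY : ∀ u : ↥X, Finset.image σ u.1 ∈ Y, Nonempty (F ≅ imageMap σ hY ⋙ G)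

/-- `F` and `G` are isomorphic functors. -/
def FuncIso {X Y : Set (Finset ℕ)} (F : (↥X) ⥤ C) (G : (↥Y) ⥤ C) : Prop :=
  ∃ σ : ℕ → ℕ, IsIsoVia σ F G

/-- Two simplices are isomorphic. -/
def Simp.Iso {m : ℕ} (f g : Simp C m) : Prop := FuncIso f.F g.F

/-- The localized index collection `X|_t`. -/
def locSet (X : Set (Finset ℕ)) (t : Finset ℕ) : Set (Finset ℕ) :=
  {u | Disjoint u t ∧ t ∪ u ∈ X}

/-- The functor `u ↦ t ∪ u` from `X|_t` to `X`. -/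
def locMap (X : Set (Finset ℕ)) (t : Finset ℕ) : (↥(locSet X t)) ⥤ (↥X) :=
  Monotone.functor (f := fun u => ⟨t ∪ u.1, u.2.2⟩)
    (fun {_ _} hab => by exact Finset.union_subset_union_right hab)

/-- The localization `F|_t` of a functor `F` at `t`. -/
def locF {X : Set (Finset ℕ)} (t : Finset ℕ) (F : (↥X) ⥤ C) : (↥(locSet X t)) ⥤ C :=
  locMap X t ⋙ F

/-- A functor together with its collection of index sets. -/
structure PFunc (C : Type u) [Category.{v} C] where
  dom : Set (Finset ℕ)
  F : (↥dom) ⥤ C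

/-- Membership of a bundled functor in a family. -/
def PFunc.MemFam (𝒜 : Fam C) (p : PFunc C) : Prop := p.F ∈ 𝒜 p.dom

/-- `q` extends `p`: `p.dom ⊆ q.dom` and `q` restricts to `p`. -/
def PFunc.Extends (q p : PFunc C) : Prop := ∃ h : p.dom ⊆ q.dom, res h q.F = p.F

/-- The bundled localization of a bundled functor. -/
def PFunc.loc (p : PFunc C) (t : Finset ℕ) : PFunc C := ⟨locSet p.dom t, locF t p.F⟩

/-- An amenable family of functors: invariant under isomorphisms, closed under
restrictions and unions, localizations, and de-localizations. -/
structure Amenable (𝒜 : Fam C) : Prop where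
  nonempty : ∃ (X : Set (Finset ℕ)) (F : (↥X) ⥤ C), F ∈ 𝒜 X
  dom_good : ∀ (X : Set (Finset ℕ)) (F : (↥X) ⥤ C), F ∈ 𝒜 X → X.Nonempty ∧ DownClosed X
  iso_invariant : ∀ {X Y : Set (Finset ℕ)} (σ : ℕ → ℕ) (F : (↥X) ⥤ C) (G : (↥Y) ⥤ C),
    F ∈ 𝒜 X → IsIsoVia σ F G → G ∈ 𝒜 Y
  restrict_union : ∀ (X : Set (Finset ℕ)) (hX : DownClosed X) (F : (↥X) ⥤ C),
    F ∈ 𝒜 X ↔ ∀ (u : Finset ℕ) (hu : u ∈ X), res (pow_subset_of_mem hX hu) F ∈ 𝒜 (pow u)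
  localization : ∀ (X : Set (Finset ℕ)) (t : Finset ℕ), t ∈ X →
    ∀ F : (↥X) ⥤ C, F ∈ 𝒜 X → locF t F ∈ 𝒜 (locSet X t)
  delocalization : ∀ p : PFunc C, p.MemFam 𝒜 → ∀ t ∈ p.dom,
    locSet p.dom t = {u | Disjoint u t ∧ u ∈ p.dom} →
    ∀ q : PFunc C, q.MemFam 𝒜 → q.Extends (p.loc t) →
      ∃ g₀ : PFunc C,
        g₀.dom = {w | ∃ u ∈ q.dom, ∃ v ⊆ t, w = u ∪ v} ∧
        g₀.MemFam 𝒜 ∧ g₀.Extends ⟨p.dom, p.F⟩ ∧ g₀.loc t = q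

/-- `h` is an `(n+1)`-path from `f` to `g`: the legs `h_k` have supports
`{k, …, k+n+1}`, the origin face of the first leg is `f`, the destination face of
the last leg is `g`, and consecutive legs match up. -/
def IsPathFrom {n : ℕ} (f g : Simp C (n + 1)) (h : Fin (n + 1) → Simp C (n + 2)) : Prop :=
  (∀ k : Fin (n + 1), (h k).supp = Finset.Icc (k : ℕ) ((k : ℕ) + n + 1)) ∧
  (h 0).face (Fin.last (n + 1)) = f ∧
  (h (Fin.last n)).face 0 = g ∧
  ∀ (k : ℕ) (hk : k < n),
    (h ⟨k, by omega⟩).face 0 = (h ⟨k + 1, by omega⟩).face (Fin.last (n + 1))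

/-- The chain `Σ_{k=0}^{n} (-1)^{n(k+1)} h_k` associated to a path. -/
noncomputable def pathChain {n : ℕ} (h : Fin (n + 1) → Simp C (n + 2)) : Chain C (n + 2) :=
  ∑ k : Fin (n + 1), ((-1 : ℤ) ^ (n * ((k : ℕ) + 1))) • Finsupp.single (h k) 1

end AmalgHomology

open AmalgHomology

namespace AmalgHomology
variable {C : Type u} [Category.{v} C]
lemma res_res {X Y Z : Set (Finset ℕ)} (h1 : X ⊆ Y) (h2 : Y ⊆ Z) (F : (↥Z) ⥤ C) :
    res h1 (res h2 F) = res (h1.trans h2) F := rfl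

lemma simp_eq {m : ℕ} (f g : Simp C m) (h : f.supp = g.supp) (hF : HEq f.F g.F) : f = g := by
  cases f; cases g; simp_all

lemma heq_res {X X' Z : Set (Finset ℕ)} (h : X = X') (h1 : X ⊆ Z) (h1' : X' ⊆ Z)
    (F : (↥Z) ⥤ C) : HEq (res h1 F) (res h1' F) := by subst h; rfl

lemma orderEmbOfFin_erase (s : Finset ℕ) {n : ℕ} (h : s.card = n + 1) (b : Fin (n + 1))
    (h' : (s.erase (s.orderEmbOfFin h b)).card = n) (j : Fin n) :
    (s.erase (s.orderEmbOfFin h b)).orderEmbOfFin h' j = s.orderEmbOfFin h (b.succAbove j) := by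
  have := Finset.orderEmbOfFin_unique h' (f := fun j => s.orderEmbOfFin h (b.succAbove j))
    (fun j => Finset.mem_erase.2 ⟨by
      simp [Finset.orderEmbOfFin_eq_orderEmbOfFin_iff, Fin.succAbove_ne b j, Fin.val_eq_val,
        (Fin.succAbove_ne b j)], Finset.orderEmbOfFin_mem _ _ _⟩)
    ((s.orderEmbOfFin h).strictMono.comp (Fin.strictMono_succAbove b))
  exact (congrFun this j).symm

lemma face_supp {m : ℕ} (f : Simp C (m + 2)) (i : Fin (m + 2)) (j : Fin (m + 1)) :
    ((f.face i).face j).supp =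
      (f.supp.erase (f.supp.orderEmbOfFin f.card_supp i)).erase
        (f.supp.orderEmbOfFin f.card_supp (i.succAbove j)) := by
  show ((f.face i).supp).erase _ = _
  rw [show (f.face i).supp.orderEmbOfFin (f.face i).card_supp j
      = f.supp.orderEmbOfFin f.card_supp (i.succAbove j) from
    orderEmbOfFin_erase f.supp f.card_supp i _ j]
  rfl


lemma face_comm {m : ℕ} (f : Simp C (m + 2)) (a b : ℕ) (hab : a < b) (hb : b < m + 2) :
    (f.face ⟨b, hb⟩).face ⟨a, by omega⟩ = (f.face ⟨a, by omega⟩).face ⟨b - 1, by omega⟩ := by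
  have hv1 : ((⟨b, hb⟩ : Fin (m + 2)).succAbove ⟨a, by omega⟩ : ℕ) = a := by
    rw [Fin.succAbove_of_castSucc_lt]
    · rfl
    · simp [Fin.lt_def]; omega
  have hv2 : ((⟨a, by omega⟩ : Fin (m + 2)).succAbove ⟨b - 1, by omega⟩ : ℕ) = b := by
    rw [Fin.succAbove_of_le_castSucc]
    · simp [Fin.val_succ]; omega
    · simp [Fin.le_def]; omega
  have h1 : f.supp.orderEmbOfFin f.card_supp ((⟨b, hb⟩ : Fin (m + 2)).succAbove ⟨a, by omega⟩)
      = f.supp.orderEmbOfFin f.card_supp ⟨a, by omega⟩ :=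
    Finset.orderEmbOfFin_eq_orderEmbOfFin_iff.2 (by exact hv1)
  have h2 : f.supp.orderEmbOfFin f.card_supp ((⟨a, by omega⟩ : Fin (m + 2)).succAbove ⟨b - 1, by omega⟩)
      = f.supp.orderEmbOfFin f.card_supp ⟨b, hb⟩ :=
    Finset.orderEmbOfFin_eq_orderEmbOfFin_iff.2 (by exact hv2)
  have hs : ((f.face ⟨b, hb⟩).face ⟨a, by omega⟩).supp
      = ((f.face ⟨a, by omega⟩).face ⟨b - 1, by omega⟩).supp := by
    simp only [face_supp, h1, h2]
    exact Finset.erase_right_comm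
  refine simp_eq _ _ hs (heq_res (congrArg pow hs)
    (fun u hu => hu.trans ((Finset.erase_subset _ _).trans (Finset.erase_subset _ _)))
    (fun u hu => hu.trans ((Finset.erase_subset _ _).trans (Finset.erase_subset _ _))) f.F)

/-- position of `t` in the face numbering of a simplex whose "missing vertex" is `i`. -/
def posIdx {m : ℕ} (i t : Fin (m + 3)) : Fin (m + 2) :=
  if h' : (t : ℕ) < (i : ℕ) then ⟨t, by have := i.isLt; omega⟩
  else ⟨(t : ℕ) - 1, by have := t.isLt; omega⟩

noncomputable def Hterm {m : ℕ} (fam : Fin (m + 3) → Simp C (m + 2)) (i t : Fin (m + 3)) :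
    Chain C (m + 1) :=
  if t = i then 0 else
    ((-1 : ℤ) ^ ((i : ℕ) + (posIdx i t : ℕ))) • Finsupp.single ((fam i).face (posIdx i t)) 1

lemma posIdx_succAbove {m : ℕ} (i : Fin (m + 3)) (j : Fin (m + 2)) :
    posIdx i (i.succAbove j) = j := by
  rcases lt_or_ge (j.castSucc) i with h | h
  · rw [Fin.succAbove_of_castSucc_lt _ _ h]
    have : ((j.castSucc : Fin (m + 3)) : ℕ) < (i : ℕ) := h
    simp only [posIdx, Fin.coe_castSucc] at this ⊢
    rw [dif_pos this]
  · rw [Fin.succAbove_of_le_castSucc _ _ h]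
    have hle : (i : ℕ) ≤ (j : ℕ) := h
    simp only [posIdx, Fin.val_succ]
    rw [dif_neg (by omega)]
    exact Fin.ext (by simp)

lemma Hterm_succAbove {m : ℕ} (fam : Fin (m + 3) → Simp C (m + 2)) (i : Fin (m + 3))
    (j : Fin (m + 2)) :
    Hterm fam i (i.succAbove j)
      = ((-1 : ℤ) ^ ((i : ℕ) + (j : ℕ))) • Finsupp.single ((fam i).face j) 1 := by
  rw [Hterm, if_neg (Fin.succAbove_ne i j), posIdx_succAbove]

lemma sboundary_Hterm {m : ℕ} (fam : Fin (m + 3) → Simp C (m + 2)) (i : Fin (m + 3)) :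
    ((-1 : ℤ) ^ (i : ℕ)) • sboundary (fam i) = ∑ t ∈ Finset.univ.erase i, Hterm fam i t := by
  have h1 : Hterm fam i i + ∑ t ∈ Finset.univ.erase i, Hterm fam i t
      = ∑ t : Fin (m + 3), Hterm fam i t := Finset.add_sum_erase _ _ (Finset.mem_univ i)
  rw [Fin.sum_univ_succAbove (fun t => Hterm fam i t) i] at h1
  have h2 : ∑ t ∈ Finset.univ.erase i, Hterm fam i t
      = ∑ j : Fin (m + 2), Hterm fam i (i.succAbove j) := by
    have h0 : Hterm fam i i = 0 := by rw [Hterm, if_pos rfl]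
    rw [h0] at h1
    simpa using h1
  rw [h2]
  rw [sboundary, Finset.smul_sum]
  refine Finset.sum_congr rfl fun j _ => ?_
  rw [Hterm_succAbove, pow_add, mul_smul]

lemma Hterm_antisymm_lt {m : ℕ} {k : Fin (m + 3)} {fam : Fin (m + 3) → Simp C (m + 2)}
    (hcompat : FanCompat k fam) {i t : Fin (m + 3)} (hik : i ≠ k) (htk : t ≠ k)
    (hit : (i : ℕ) < (t : ℕ)) :
    Hterm fam i t + Hterm fam t i = 0 := by
  have hne1 : t ≠ i := fun h => by rw [h] at hit; omega
  have hne2 : i ≠ t := fun h => by rw [h] at hit; omega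
  rw [Hterm, if_neg hne1, Hterm, if_neg hne2]
  have hp1 : posIdx i t = ⟨(t : ℕ) - 1, by have := t.isLt; omega⟩ := by
    rw [posIdx, dif_neg (by omega)]
  have hp2 : posIdx t i = ⟨(i : ℕ), by have := t.isLt; omega⟩ := by
    rw [posIdx, dif_pos hit]
  have hcomp := hcompat (i : ℕ) (t : ℕ) hit t.isLt
    (fun h => hik (Fin.ext h)) (fun h => htk (Fin.ext h))
  rw [hp1, hp2]
  have hfam1 : fam ⟨(t : ℕ), t.isLt⟩ = fam t := by congr 1
  have hfam2 : fam ⟨(i : ℕ), by omega⟩ = fam i := by congr 1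
  rw [hfam1, hfam2] at hcomp
  rw [hcomp]
  rw [← add_smul]
  convert zero_smul ℤ _
  have h1 : (t : ℕ) + (i : ℕ) = ((i : ℕ) + ((t : ℕ) - 1)) + 1 := by omega
  rw [h1, pow_succ]
  ring

lemma Hterm_antisymm {m : ℕ} {k : Fin (m + 3)} {fam : Fin (m + 3) → Simp C (m + 2)}
    (hcompat : FanCompat k fam) {i t : Fin (m + 3)} (hik : i ≠ k) (htk : t ≠ k) :
    Hterm fam i t + Hterm fam t i = 0 := by
  rcases lt_trichotomy (i : ℕ) (t : ℕ) with h | h | h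
  · exact Hterm_antisymm_lt hcompat hik htk h
  · have ht : t = i := Fin.ext h.symm
    subst ht
    rw [Hterm, if_pos rfl, add_zero]
  · exact (add_comm (Hterm fam i t) (Hterm fam t i)).trans
      (Hterm_antisymm_lt hcompat htk hik h)

noncomputable def bdHom {m : ℕ} : Chain C (m + 1) →ₗ[ℤ] Chain C m :=
  Finsupp.lsum ℤ fun f => LinearMap.toSpanSingleton ℤ _ (sboundary f)

lemma bd_eq_bdHom {m : ℕ} (c : Chain C (m + 1)) : bd c = bdHom c := rfl

lemma bdHom_single {m : ℕ} (f : Simp C (m + 1)) :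
    bdHom (Finsupp.single f 1) = sboundary f := by
  rw [bdHom, Finsupp.lsum_single, LinearMap.toSpanSingleton_apply, one_smul]

/-- The double sum over off-`k` pairs vanishes by antisymmetry. -/
lemma double_sum_zero {m : ℕ} {k : Fin (m + 3)} {fam : Fin (m + 3) → Simp C (m + 2)}
    (hcompat : FanCompat k fam) :
    ∑ i ∈ Finset.univ.erase k, ∑ t ∈ Finset.univ.erase k, Hterm fam i t = 0 := by
  rw [← Finset.sum_product']
  refine Finset.sum_involution (fun p _ => p.swap) ?_ ?_ ?_ ?_
  · rintro ⟨i, t⟩ hp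
    have hik : i ≠ k := (Finset.mem_erase.1 (Finset.mem_product.1 hp).1).1
    have htk : t ≠ k := (Finset.mem_erase.1 (Finset.mem_product.1 hp).2).1
    exact Hterm_antisymm hcompat hik htk
  · rintro ⟨i, t⟩ hp hne heq
    have : t = i := congrArg Prod.fst heq
    subst this
    exact hne (by rw [Hterm, if_pos rfl])
  · rintro ⟨i, t⟩ hp
    rw [Finset.mem_product] at hp ⊢
    exact ⟨hp.2, hp.1⟩
  · rintro ⟨i, t⟩ _
    rfl

lemma bd_fanChain {m : ℕ} (k : Fin (m + 3)) (fam : Fin (m + 3) → Simp C (m + 2))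
    (hcompat : FanCompat k fam) :
    bd (fanChain k fam) = ∑ i ∈ Finset.univ.erase k, Hterm fam i k := by
  rw [bd_eq_bdHom, fanChain, map_sum]
  have step1 : ∀ i ∈ Finset.univ.erase k,
      bdHom (((-1 : ℤ) ^ (i : ℕ)) • Finsupp.single (fam i) 1)
        = ∑ t ∈ Finset.univ.erase i, Hterm fam i t := by
    intro i _
    rw [map_smul, bdHom_single, sboundary_Hterm]
  rw [Finset.sum_congr rfl step1]
  have step2 : ∀ i ∈ Finset.univ.erase k,
      ∑ t ∈ Finset.univ.erase i, Hterm fam i t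
        = Hterm fam i k + ∑ t ∈ Finset.univ.erase k, Hterm fam i t := by
    intro i hi
    have hik : i ≠ k := (Finset.mem_erase.1 hi).1
    have hki : k ∈ Finset.univ.erase i := Finset.mem_erase.2 ⟨hik.symm, Finset.mem_univ k⟩
    rw [← Finset.add_sum_erase _ _ hki]
    congr 1
    rw [Finset.erase_right_comm]
    have hz : Hterm fam i i = 0 := by rw [Hterm, if_pos rfl]
    exact Finset.sum_erase _ hz
  rw [Finset.sum_congr rfl step2, Finset.sum_add_distrib, double_sum_zero hcompat, add_zero]

/-- The shell obtained from the boundary of a fan. -/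
noncomputable def gfan {m : ℕ} (k : Fin (m + 3)) (fam : Fin (m + 3) → Simp C (m + 2))
    (r : Fin (m + 2)) : Simp C (m + 1) :=
  (fam (k.succAbove r)).face (posIdx (k.succAbove r) k)

lemma Hterm_at_k {m : ℕ} (k : Fin (m + 3)) (fam : Fin (m + 3) → Simp C (m + 2))
    (r : Fin (m + 2)) :
    Hterm fam (k.succAbove r) k
      = ((-1 : ℤ) ^ ((k : ℕ) + 1 + (r : ℕ))) • Finsupp.single (gfan k fam r) 1 := by
  rw [Hterm, if_neg (fun h => (Fin.succAbove_ne k r) h.symm), gfan]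
  congr 1
  rcases lt_or_ge (r.castSucc) k with h | h
  · have hvi : ((k.succAbove r : Fin (m + 3)) : ℕ) = (r : ℕ) := by
      rw [Fin.succAbove_of_castSucc_lt _ _ h]; rfl
    have hval : ((posIdx (k.succAbove r) k : Fin (m + 2)) : ℕ) = (k : ℕ) - 1 := by
      rw [posIdx, dif_neg (by rw [hvi]; have : (r : ℕ) < (k : ℕ) := h; omega)]
    rw [hvi, hval, neg_one_pow_eq_pow_mod_two, neg_one_pow_eq_pow_mod_two ((k : ℕ) + 1 + r)]
    congr 1
    have : (r : ℕ) < (k : ℕ) := h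
    omega
  · have hvi : ((k.succAbove r : Fin (m + 3)) : ℕ) = (r : ℕ) + 1 := by
      rw [Fin.succAbove_of_le_castSucc _ _ h]; rfl
    have hval : ((posIdx (k.succAbove r) k : Fin (m + 2)) : ℕ) = (k : ℕ) := by
      have : (k : ℕ) ≤ (r : ℕ) := h
      rw [posIdx, dif_pos (by rw [hvi]; omega)]
    rw [hvi, hval]
    congr 1
    omega

lemma bd_fanChain_shell {m : ℕ} (k : Fin (m + 3)) (fam : Fin (m + 3) → Simp C (m + 2))
    (hcompat : FanCompat k fam) :
    bd (fanChain k fam) = ((-1 : ℤ) ^ ((k : ℕ) + 1)) • shellChain (gfan k fam) := by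
  rw [bd_fanChain k fam hcompat]
  have h1 : Hterm fam k k + ∑ i ∈ Finset.univ.erase k, Hterm fam i k
      = ∑ i : Fin (m + 3), Hterm fam i k :=
    Finset.add_sum_erase _ (fun i => Hterm fam i k) (Finset.mem_univ k)
  rw [Fin.sum_univ_succAbove (fun i => Hterm fam i k) k] at h1
  have h0 : Hterm fam k k = 0 := by rw [Hterm, if_pos rfl]
  rw [h0] at h1
  have h2 : ∑ i ∈ Finset.univ.erase k, Hterm fam i k
      = ∑ r : Fin (m + 2), Hterm fam (k.succAbove r) k := by simpa using h1
  rw [h2, shellChain, Finset.smul_sum]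
  refine Finset.sum_congr rfl fun r _ => ?_
  rw [Hterm_at_k, ← mul_smul, ← pow_add]

lemma gfan_lt {m : ℕ} (k : Fin (m + 3)) (fam : Fin (m + 3) → Simp C (m + 2))
    (r : Fin (m + 2)) (h : (r : ℕ) < (k : ℕ)) :
    gfan k fam r = (fam ⟨(r : ℕ), by omega⟩).face
      ⟨(k : ℕ) - 1, by have := k.isLt; omega⟩ := by
  have hs : k.succAbove r = ⟨(r : ℕ), by omega⟩ := by
    rw [Fin.succAbove_of_castSucc_lt _ _ (by exact h)]; rfl
  rw [gfan, hs]
  congr 1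
  rw [posIdx, dif_neg (by simp; omega)]

lemma gfan_ge {m : ℕ} (k : Fin (m + 3)) (fam : Fin (m + 3) → Simp C (m + 2))
    (r : Fin (m + 2)) (h : (k : ℕ) ≤ (r : ℕ)) :
    gfan k fam r = (fam ⟨(r : ℕ) + 1, by omega⟩).face ⟨(k : ℕ), by omega⟩ := by
  have hs : k.succAbove r = ⟨(r : ℕ) + 1, by omega⟩ := by
    rw [Fin.succAbove_of_le_castSucc _ _ (by exact h)]; rfl
  rw [gfan, hs]
  congr 1
  rw [posIdx, dif_pos (by simp; omega)]

lemma gfan_shellCompat {m : ℕ} (k : Fin (m + 3)) (fam : Fin (m + 3) → Simp C (m + 2))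
    (hcompat : FanCompat k fam) : ShellCompat (gfan k fam) := by
  intro i j hij hj
  rcases lt_or_ge j (k : ℕ) with hA | hB
  · -- i < j < k
    rw [gfan_lt k fam ⟨j, hj⟩ hA, gfan_lt k fam ⟨i, by omega⟩ (by simp; omega)]
    rw [face_comm (fam ⟨j, by omega⟩) i ((k : ℕ) - 1) (by omega) (by have := k.isLt; omega)]
    rw [face_comm (fam ⟨i, by omega⟩) (j - 1) ((k : ℕ) - 1) (by omega)
      (by have := k.isLt; omega)]
    rw [hcompat i j hij (by omega) (by omega) (by omega)]
  rcases lt_or_ge i (k : ℕ) with hB' | hC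
  · -- i < k ≤ j
    rw [gfan_ge k fam ⟨j, hj⟩ hB, gfan_lt k fam ⟨i, by omega⟩ (by simp; omega)]
    rw [face_comm (fam ⟨j + 1, by omega⟩) i (k : ℕ) (by omega) (by omega)]
    have hcc := hcompat i (j + 1) (by omega) (by omega) (by omega) (by omega)
    simp only [Nat.add_sub_cancel] at hcc
    rw [hcc]
    rw [face_comm (fam ⟨i, by omega⟩) ((k : ℕ) - 1) j (by omega) (by omega)]
  · -- k ≤ i < j
    rw [gfan_ge k fam ⟨j, hj⟩ hB, gfan_ge k fam ⟨i, by omega⟩ (by simp; omega)]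
    have hc := face_comm (fam ⟨j + 1, by omega⟩) (k : ℕ) (i + 1) (by omega) (by omega)
    simp only [Nat.add_sub_cancel] at hc
    rw [← hc]
    have hcc := hcompat (i + 1) (j + 1) (by omega) (by omega) (by omega) (by omega)
    simp only [Nat.add_sub_cancel] at hcc
    rw [hcc]
    rw [face_comm (fam ⟨i + 1, by omega⟩) (k : ℕ) j (by omega) (by omega)]

end AmalgHomology

/-- if `c` is an `n`-fan (here `n = m + 1 ≥ 1`), i.e. an `n`-shell
with the `k`-th term removed, then `∂_n c` is an `(n-1)`-shell. -/
theorem fan_boundary_is_shell {C : Type u} [Category.{v} C]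
    (𝒜 : Fam C) (B : C) (h𝒜 : Amenable 𝒜) {m : ℕ}
    (ε : ℤ) (hε : ε = 1 ∨ ε = -1) (k : Fin (m + 3))
    (fam : Fin (m + 3) → Simp C (m + 2))
    (hcompat : FanCompat k fam)
    (hfam : ∀ i, i ≠ k → (fam i).InFam 𝒜 ∧ (fam i).base = B) :
    IsShell (bd (ε • fanChain k fam)) := by
  refine ⟨ε * (-1) ^ ((k : ℕ) + 1), gfan k fam, ?_, gfan_shellCompat k fam hcompat, ?_⟩
  · rcases Nat.even_or_odd ((k : ℕ) + 1) with hp | hp <;>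
      rcases hε with rfl | rfl <;> simp [hp.neg_one_pow]
  · rw [bd_eq_bdHom, map_smul, ← bd_eq_bdHom, bd_fanChain_shell k fam hcompat, smul_smul]
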